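/- arXiv:2112.03366 — 2 statements merged into one kernel-verified Lean document; each statement's English description precedes it below -/
import Mathlib

section
/- Let n ≥ 7 and let G and H be simple graphs on n vertices that share n−1 cards via vertices u ∈ V(G), w ∈ V(H) and a bijection π. Suppose Δ(G) = Δ(H) = n−2, deg(u,G) < n−2, and deg(w,H) < n−2. Then for every integer r ≥ 1 we have κ_r(G) = κ_r(H). -/
/-!
Extend `π` to a permutation `σ` with `σ u = w`. Each shared card `G - v ≅ H - σ v` gives
`κ_r(G) - degR_r(G, v) = κ_r(H) - degR_r(H, σ v)`. A vertex has degree `n - 2` exactly when it has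
a sole non-neighbour, i.e. degree one in the complement.

At `r = 2` this identity at a maximum-degree vertex of either graph yields `κ₂(G) = κ₂(H)`, so `σ`
preserves degrees away from `u`. A vertex `y` is universal in `G - v` exactly when `v` is the sole
non-neighbour of `y`, so `σ` also preserves the number of vertices whose sole non-neighbour is `v`
(at `u` as well, since both counts sum to the number of maximum-degree vertices).

Then induct on `r`. If `κ_r(G) = κ_r(H)`, Kelly's lemma `∑_v degR_r(v) = r κ_r` shows that `σ`
preserves `degR_r` everywhere. The `(r+1)`-cliques through a maximum-degree vertex `y` are `y` plus
an `r`-clique avoiding `y` and its sole non-neighbour `ȳ`, so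
`κ_r = degR_r(y) + degR_r(ȳ) + degR_{r+1}(y)`. With the card identity at level `r + 1` this becomes
`κ_{r+1}(G) + degR_r(G, ȳ) = κ_{r+1}(H) + degR_r(H, z)`, where `z` is the sole non-neighbour of
`σ y` in `H`; summed over all maximum-degree `y`, the `degR_r` terms agree by double counting.
-/

open SimpleGraph

/-- `kappa G r` is the number of `r`-cliques of the graph `G`. -/
noncomputable def kappa {V : Type*} (G : SimpleGraph V) (r : ℕ) : ℕ :=
  (G.cliqueSet r).ncard

/-- `degR G r v` is the number of `r`-cliques of `G` that contain the vertex `v`. -/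
noncomputable def degR {V : Type*} (G : SimpleGraph V) (r : ℕ) (v : V) : ℕ :=
  {s | s ∈ G.cliqueSet r ∧ v ∈ s}.ncard

/-- `deg G v` is the degree of the vertex `v` in `G`. -/
noncomputable def deg {V : Type*} (G : SimpleGraph V) (v : V) : ℕ :=
  (G.neighborSet v).ncard

/-- `gcard G v` is the card `G - v`: the induced subgraph of `G` on `V(G) \ {v}`. -/
def gcard {V : Type*} (G : SimpleGraph V) (v : V) : SimpleGraph {x : V // x ≠ v} :=
  G.induce {x : V | x ≠ v}

/-- The maximum degree `Δ(G)`. -/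
noncomputable def maxDeg {n : ℕ} (G : SimpleGraph (Fin n)) : ℕ :=
  Finset.univ.sup (fun v => deg G v)

/-- The minimum degree `δ(G)`. -/
noncomputable def minDeg {n : ℕ} (G : SimpleGraph (Fin n)) : ℕ :=
  sInf (Set.range (fun v => deg G v))

/-- `ℓ(G)`: the number of vertices of maximum degree. -/
noncomputable def numMaxDeg {n : ℕ} (G : SimpleGraph (Fin n)) : ℕ :=
  (Finset.univ.filter (fun v => deg G v = maxDeg G)).card

/-- `G` and `H` share `n-1` cards via the vertices `u`, `w` and the bijection `π`:
for every `v ≠ u`, the card `G - v` is isomorphic to the card `H - π(v)`. -/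
def ShareCardsVia {n : ℕ} (G H : SimpleGraph (Fin n)) (u w : Fin n)
    (π : {x : Fin n // x ≠ u} ≃ {y : Fin n // y ≠ w}) : Prop :=
  ∀ v : {x : Fin n // x ≠ u}, Nonempty (gcard G v.1 ≃g gcard H (π v).1)

/-- `G` and `H` share `n-1` cards. -/
def ShareCards {n : ℕ} (G H : SimpleGraph (Fin n)) : Prop :=
  ∃ (u w : Fin n) (π : {x : Fin n // x ≠ u} ≃ {y : Fin n // y ≠ w}),
    ShareCardsVia G H u w π

open Finset

section Counting

variable {V : Type*} [Fintype V] (G : SimpleGraph V) [DecidableRel G.Adj]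

theorem deg_eq_degree (v : V) : deg G v = G.degree v := by
  rw [deg, ← card_neighborSet_eq_degree, Set.ncard_eq_toFinset_card', Set.toFinset_card]

variable [DecidableEq V]

theorem kappa_eq_card (r : ℕ) : kappa G r = #(G.cliqueFinset r) := by
  rw [kappa, ← coe_cliqueFinset, Set.ncard_coe_finset]

theorem degR_eq_card (r : ℕ) (v : V) : degR G r v = #{s ∈ G.cliqueFinset r | v ∈ s} := by
  rw [degR, ← Set.ncard_coe_finset]
  congr 1
  ext s
  simp

theorem kappa_zero : kappa G 0 = 1 := by
  rw [kappa_eq_card, card_eq_one]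
  exact ⟨∅, by ext; simp [mem_cliqueFinset_iff]⟩

theorem sum_degR (r : ℕ) : ∑ v, degR G r v = r * kappa G r := by
  have h := sum_card_bipartiteAbove_eq_sum_card_bipartiteBelow (fun v (s : Finset V) => v ∈ s)
    (s := univ) (t := G.cliqueFinset r)
  simp only [bipartiteAbove, bipartiteBelow, filter_mem_eq_inter, univ_inter] at h
  simp_rw [degR_eq_card, h, kappa_eq_card]
  rw [sum_congr rfl fun s hs => (mem_cliqueFinset_iff.1 hs).card_eq, sum_const, smul_eq_mul,
    mul_comm]

theorem kappa_gcard (r : ℕ) (v : V) : kappa (gcard G v) r = #{t ∈ G.cliqueFinset r | v ∉ t} := by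
  classical
  rw [kappa_eq_card]
  refine card_bij (fun t _ => t.map (.subtype _)) (fun t ht => ?_)
    (fun _ _ _ _ h => map_injective _ h) (fun t ht => ?_)
  · rw [mem_cliqueFinset_iff, gcard, isNClique_induce_iff] at ht
    simp only [mem_filter, mem_cliqueFinset_iff]
    exact ⟨ht, by simp⟩
  · simp only [mem_filter, mem_cliqueFinset_iff] at ht
    have hmap := subtype_map_of_mem fun x (hx : x ∈ t) => show x ≠ v from fun h => ht.2 (h ▸ hx)
    refine ⟨t.subtype (· ≠ v), ?_, hmap⟩
    rw [mem_cliqueFinset_iff, gcard, isNClique_induce_iff]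
    exact (congrArg (G.IsNClique r) hmap).mpr ht.1

theorem kappa_eq_kappa_gcard_add_degR (r : ℕ) (v : V) :
    kappa G r = kappa (gcard G v) r + degR G r v := by
  rw [kappa_gcard, degR_eq_card, kappa_eq_card, add_comm, card_filter_add_card_filter_not]

theorem degR_succ (r : ℕ) (y : V) :
    degR G (r + 1) y = #{t ∈ G.cliqueFinset r | ∀ x ∈ t, G.Adj y x} := by
  rw [degR_eq_card]
  refine card_nbij' (·.erase y) (insert y) (fun s hs => ?_) (fun t ht => ?_)
    (fun s hs => insert_erase (mem_filter.1 hs).2) (fun t ht => erase_insert fun hy => ?_)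
  · simp only [mem_coe, mem_filter, mem_cliqueFinset_iff] at hs ⊢
    exact ⟨hs.1.erase_of_mem hs.2, fun x hx =>
      hs.1.isClique hs.2 (mem_of_mem_erase hx) (ne_of_mem_erase hx).symm⟩
  · simp only [mem_coe, mem_filter, mem_cliqueFinset_iff] at ht ⊢
    exact ⟨ht.1.insert ht.2, mem_insert_self y t⟩
  · exact G.irrefl ((mem_filter.1 ht).2 y hy)

theorem degR_two (v : V) : degR G 2 v = G.degree v := by
  have : {t ∈ G.cliqueFinset 1 | ∀ x ∈ t, G.Adj v x}
      = (G.neighborFinset v).map ⟨singleton, singleton_injective⟩ := by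
    ext t
    simp only [mem_filter, mem_cliqueFinset_iff, isNClique_one, mem_map, mem_neighborFinset,
      Function.Embedding.coeFn_mk]
    constructor
    · rintro ⟨⟨a, rfl⟩, h⟩
      exact ⟨a, h a (mem_singleton_self a), rfl⟩
    · rintro ⟨a, h, rfl⟩
      exact ⟨⟨a, rfl⟩, by simpa using h⟩
  rw [degR_succ, this, card_map, card_neighborFinset_eq_degree]

theorem kappa_eq_of_compl_degree_eq_one {y : V} (hy : Gᶜ.degree y = 1) (r : ℕ) :
    kappa G r = degR G r y + ∑ v ∈ Gᶜ.neighborFinset y, degR G r v + degR G (r + 1) y := by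
  obtain ⟨z, hz⟩ := card_eq_one.1 hy
  have hyz : Gᶜ.Adj y z := by simp [← mem_neighborFinset, hz]
  have hadj : ∀ x, x ≠ y → x ≠ z → G.Adj y x := fun x hxy hxz => by
    by_contra hx
    exact hxz (mem_singleton.1 (hz ▸ (mem_neighborFinset _ _ _).2 ⟨hxy.symm, hx⟩))
  rw [hz, sum_singleton, degR_succ, degR_eq_card, degR_eq_card, kappa_eq_card,
    ← card_filter_add_card_filter_not (p := (y ∈ ·)),
    ← card_filter_add_card_filter_not (s := {s ∈ G.cliqueFinset r | y ∉ s}) (p := (z ∈ ·)),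
    filter_filter, filter_filter, add_assoc]
  congr 3 <;> ext s <;> simp only [mem_filter, mem_cliqueFinset_iff]
  · exact ⟨fun h => ⟨h.1, h.2.2⟩,
      fun h => ⟨h.1, fun hys => hyz.2 (h.1.isClique hys h.2 hyz.1), h.2⟩⟩
  · refine and_congr_right fun _ => ⟨fun ⟨hys, hzs⟩ x hx => ?_, fun h => ?_⟩
    · exact hadj x (ne_of_mem_of_not_mem hx hys) (ne_of_mem_of_not_mem hx hzs)
    · exact ⟨fun hys => G.irrefl (h y hys), fun hzs => hyz.2 (h z hzs)⟩

end Counting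

theorem SimpleGraph.Iso.kappa_eq {α β : Type*} {A : SimpleGraph α} {B : SimpleGraph β}
    (e : A ≃g B) (r : ℕ) : kappa A r = kappa B r := by
  have hB : A.map e.toEquiv = B := by
    ext x y
    obtain ⟨a, rfl⟩ := e.surjective x
    obtain ⟨b, rfl⟩ := e.surjective y
    exact (map_adj_apply (f := (e.toEquiv : α ↪ β))).trans e.map_adj_iff.symm
  rw [kappa, kappa, ← hB, cliqueSet_map_of_equiv,
    Set.ncard_image_of_injective _ (Finset.map_injective _)]

theorem SimpleGraph.Iso.isUniversal_iff {α β : Type*} {A : SimpleGraph α} {B : SimpleGraph β}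
    (e : A ≃g B) {a : α} : B.IsUniversal (e a) ↔ A.IsUniversal a := by
  simp only [IsUniversal, e.surjective.forall, e.injective.ne_iff, e.map_adj_iff]

theorem SimpleGraph.Iso.ncard_universalVerts_eq {α β : Type*} {A : SimpleGraph α}
    {B : SimpleGraph β} (e : A ≃g B) : A.universalVerts.ncard = B.universalVerts.ncard := by
  rw [← Set.ncard_image_of_injective _ e.injective]
  congr 1
  ext x
  obtain ⟨a, rfl⟩ := e.surjective x
  simp [universalVerts, e.isUniversal_iff]

theorem Equiv.eq_comp_of_sum_eq_of_forall_ne {α M : Type*} [Fintype α] [DecidableEq α]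
    [AddCancelCommMonoid M] (σ : α ≃ α) {f g : α → M} {u : α}
    (hsum : ∑ a, f a = ∑ a, g a) (h : ∀ a, a ≠ u → f a = g (σ a)) : f = g ∘ σ := by
  rw [← σ.sum_comp g, ← add_sum_erase _ _ (mem_univ u), ← add_sum_erase _ _ (mem_univ u),
    sum_congr rfl fun a ha => h a (ne_of_mem_erase ha)] at hsum
  funext a
  obtain rfl | ha := eq_or_ne a u
  exacts [add_right_cancel hsum, h a ha]

theorem isUniversal_gcard_iff {V : Type*} (G : SimpleGraph V) {v : V} (y : {x // x ≠ v}) :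
    (gcard G v).IsUniversal y ↔ ∀ x, Gᶜ.Adj y x → x = v := by
  refine ⟨fun h x hx => ?_, fun h w hw => ?_⟩
  · by_contra hxv
    exact hx.2 (h (w := ⟨x, hxv⟩) fun hyx => hx.1 (congrArg Subtype.val hyx))
  · by_contra hyw
    exact w.2 (h w ⟨fun h' => hw (Subtype.ext h'), hyw⟩)

section SoleNonNeighbour

variable {V : Type*} [Fintype V]

theorem sum_sum_neighborFinset (K : SimpleGraph V) [DecidableRel K.Adj] (s : Finset V)
    (f : V → ℕ) : ∑ y ∈ s, ∑ v ∈ K.neighborFinset y, f v = ∑ v, #{y ∈ s | K.Adj y v} * f v := by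
  have h := sum_sum_bipartiteAbove_eq_sum_sum_bipartiteBelow (s := s) (t := univ) K.Adj
    (fun _ v => f v)
  simp only [bipartiteAbove, bipartiteBelow, ← neighborFinset_eq_filter, sum_const,
    smul_eq_mul] at h
  exact h

theorem neighborFinset_eq_singleton_iff (K : SimpleGraph V) [DecidableRel K.Adj] {y v : V} :
    K.neighborFinset y = {v} ↔ K.degree y = 1 ∧ K.Adj y v := by
  rw [← card_neighborFinset_eq_degree, ← mem_neighborFinset]
  exact ⟨fun h => by simp [h], fun ⟨h1, hv⟩ => eq_singleton_iff_unique_mem.2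
    ⟨hv, fun x hx => card_le_one.1 h1.le x hx v hv⟩⟩

variable [DecidableEq V] (G : SimpleGraph V) [DecidableRel G.Adj]

noncomputable def soleNonNbrCount (v : V) : ℕ := #{y | Gᶜ.neighborFinset y = {v}}

theorem sum_sum_compl_neighborFinset (f : V → ℕ) :
    ∑ y ∈ {y | Gᶜ.degree y = 1}, ∑ v ∈ Gᶜ.neighborFinset y, f v
      = ∑ v, soleNonNbrCount G v * f v := by
  simp_rw [sum_sum_neighborFinset, soleNonNbrCount, filter_filter, neighborFinset_eq_singleton_iff]

theorem sum_soleNonNbrCount : ∑ v, soleNonNbrCount G v = #{y | Gᶜ.degree y = 1} := by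
  have h := sum_sum_compl_neighborFinset G 1
  simp only [Pi.one_apply, sum_const, smul_eq_mul, mul_one, card_neighborFinset_eq_degree] at h
  rw [← h, sum_congr rfl fun y hy => (mem_filter.1 hy).2, sum_const, smul_eq_mul, mul_one]

theorem ncard_universalVerts_gcard (hG : ∀ y, 0 < Gᶜ.degree y) (v : V) :
    (gcard G v).universalVerts.ncard = soleNonNbrCount G v := by
  rw [← Set.ncard_image_of_injective _ Subtype.val_injective, soleNonNbrCount,
    ← Set.ncard_coe_finset]
  congr 1
  ext y
  simp only [Set.mem_image, universalVerts, Set.mem_ofPred_eq, isUniversal_gcard_iff, coe_filter,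
    mem_univ, true_and, eq_singleton_iff_nonempty_unique_mem, mem_neighborFinset]
  constructor
  · rintro ⟨⟨y, _⟩, h, rfl⟩
    exact ⟨card_pos.1 ((card_neighborFinset_eq_degree _ _).trans_gt (hG y)), h⟩
  · rintro ⟨⟨x, hx⟩, h⟩
    rw [mem_neighborFinset] at hx
    obtain rfl := h x hx
    exact ⟨⟨y, hx.ne⟩, h, rfl⟩

end SoleNonNeighbour

def ShareCardsExcept {V : Type*} (G H : SimpleGraph V) (u : V) (σ : V ≃ V) : Prop :=
  ∀ v, v ≠ u → Nonempty (gcard G v ≃g gcard H (σ v))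

theorem ShareCardsVia.exists_shareCardsExcept {n : ℕ} {G H : SimpleGraph (Fin n)} {u w : Fin n}
    {π : {x : Fin n // x ≠ u} ≃ {y : Fin n // y ≠ w}} (h : ShareCardsVia G H u w π) :
    ∃ σ : Fin n ≃ Fin n, σ u = w ∧ ShareCardsExcept G H u σ := by
  obtain ⟨σ, hσu, hσ⟩ : ∃ σ : Fin n ≃ Fin n, σ u = w ∧ ∀ v (hv : v ≠ u), σ v = π ⟨v, hv⟩ :=
    ⟨(Equiv.optionSubtypeNe u).symm.trans (π.optionCongr.trans (Equiv.optionSubtypeNe w)),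
      by simp, fun v hv => by simp [Equiv.optionSubtypeNe_symm_of_ne hv]⟩
  exact ⟨σ, hσu, fun v hv => by rw [hσ v hv]; exact h ⟨v, hv⟩⟩

namespace ShareCardsExcept

variable {V : Type*} {G H : SimpleGraph V} {u : V} {σ : V ≃ V}

theorem symm (h : ShareCardsExcept G H u σ) : ShareCardsExcept H G (σ u) σ.symm := by
  intro x hx
  obtain ⟨e⟩ := h (σ.symm x) fun hxu => hx (by rw [← hxu, σ.apply_symm_apply])
  rw [σ.apply_symm_apply] at e
  exact ⟨e.symm⟩

variable [Fintype V] [DecidableEq V] [DecidableRel G.Adj] [DecidableRel H.Adj]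

theorem kappa_add_degR (h : ShareCardsExcept G H u σ) {v : V} (hv : v ≠ u) (r : ℕ) :
    kappa G r + degR H r (σ v) = kappa H r + degR G r v := by
  obtain ⟨e⟩ := h v hv
  rw [kappa_eq_kappa_gcard_add_degR G r v, kappa_eq_kappa_gcard_add_degR H r (σ v), e.kappa_eq]
  ring

theorem kappa_two_add_compl_degree (h : ShareCardsExcept G H u σ) {v : V} (hv : v ≠ u) :
    kappa G 2 + Gᶜ.degree v = kappa H 2 + Hᶜ.degree (σ v) := by
  have h2 := h.kappa_add_degR hv 2
  rw [degR_two, degR_two] at h2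
  have hG := G.degree_lt_card_verts v
  have hH := H.degree_lt_card_verts (σ v)
  rw [degree_compl, degree_compl]
  omega

theorem kappa_two_le (h : ShareCardsExcept G H u σ) (hH : ∀ x, 0 < Hᶜ.degree x) {y : V}
    (hyu : y ≠ u) (hy : Gᶜ.degree y = 1) : kappa H 2 ≤ kappa G 2 := by
  have := h.kappa_two_add_compl_degree hyu
  have := hH (σ y)
  omega

theorem degR_eq (h : ShareCardsExcept G H u σ) {r : ℕ} (hκ : kappa G r = kappa H r) :
    degR G r = degR H r ∘ σ :=
  σ.eq_comp_of_sum_eq_of_forall_ne (by rw [sum_degR, sum_degR, hκ])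
    fun v hv => by have := h.kappa_add_degR hv r; omega

theorem soleNonNbrCount_eq (h : ShareCardsExcept G H u σ) (hG : ∀ y, 0 < Gᶜ.degree y)
    (hH : ∀ y, 0 < Hᶜ.degree y) (hM : ∀ y, Gᶜ.degree y = 1 ↔ Hᶜ.degree (σ y) = 1) :
    soleNonNbrCount G = soleNonNbrCount H ∘ σ := by
  refine σ.eq_comp_of_sum_eq_of_forall_ne (u := u) ?_ fun v hv => ?_
  · rw [sum_soleNonNbrCount, sum_soleNonNbrCount]
    exact card_equiv σ (by simp [hM])
  · obtain ⟨e⟩ := h v hv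
    rw [← ncard_universalVerts_gcard G hG, ← ncard_universalVerts_gcard H hH,
      e.ncard_universalVerts_eq]

theorem kappa_succ_eq (h : ShareCardsExcept G H u σ) (hG : ∀ y, 0 < Gᶜ.degree y)
    (hH : ∀ y, 0 < Hᶜ.degree y) (hM : ∀ y, Gᶜ.degree y = 1 ↔ Hᶜ.degree (σ y) = 1)
    (hu : Gᶜ.degree u ≠ 1) (hne : ∃ y, Gᶜ.degree y = 1) {r : ℕ}
    (hκ : kappa G r = kappa H r) : kappa G (r + 1) = kappa H (r + 1) := by
  have hdegR : ∀ v, degR G r v = degR H r (σ v) := congrFun (h.degR_eq hκ)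
  have hcount : ∀ v, soleNonNbrCount G v = soleNonNbrCount H (σ v) :=
    congrFun (h.soleNonNbrCount_eq hG hH hM)
  have hlocal : ∀ y ∈ ({y | Gᶜ.degree y = 1} : Finset V),
      kappa G (r + 1) + ∑ v ∈ Gᶜ.neighborFinset y, degR G r v
        = kappa H (r + 1) + ∑ t ∈ Hᶜ.neighborFinset (σ y), degR H r t := by
    intro y hy
    replace hy := (mem_filter.1 hy).2
    have hG' := kappa_eq_of_compl_degree_eq_one G hy r
    have hH' := kappa_eq_of_compl_degree_eq_one H ((hM y).1 hy) r
    have hcard := h.kappa_add_degR (fun hyu => hu (hyu ▸ hy)) (r + 1)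
    rw [hdegR y] at hG'
    omega
  have hglobal : ∑ y ∈ ({y | Gᶜ.degree y = 1} : Finset V), ∑ v ∈ Gᶜ.neighborFinset y, degR G r v
      = ∑ y ∈ ({y | Gᶜ.degree y = 1} : Finset V), ∑ t ∈ Hᶜ.neighborFinset (σ y), degR H r t :=
    calc _ = ∑ v, soleNonNbrCount G v * degR G r v := sum_sum_compl_neighborFinset G _
      _ = ∑ v, soleNonNbrCount H (σ v) * degR H r (σ v) := by simp only [hcount, hdegR]
      _ = ∑ t, soleNonNbrCount H t * degR H r t :=
          σ.sum_comp fun t => soleNonNbrCount H t * degR H r t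
      _ = ∑ x ∈ ({x | Hᶜ.degree x = 1} : Finset V), ∑ t ∈ Hᶜ.neighborFinset x, degR H r t :=
          (sum_sum_compl_neighborFinset H _).symm
      _ = _ := (sum_equiv σ (by simp [hM]) fun _ _ => rfl).symm
  have hsum := sum_congr rfl hlocal
  rw [sum_add_distrib, sum_add_distrib, hglobal, sum_const, sum_const, smul_eq_mul,
    smul_eq_mul] at hsum
  obtain ⟨y, hy⟩ := hne
  exact Nat.eq_of_mul_eq_mul_left (card_pos.2 ⟨y, mem_filter.2 ⟨mem_univ y, hy⟩⟩)
    (add_right_cancel hsum)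

theorem kappa_eq (h : ShareCardsExcept G H u σ) (hG : ∀ y, 0 < Gᶜ.degree y)
    (hH : ∀ x, 0 < Hᶜ.degree x) (hu : Gᶜ.degree u ≠ 1) (hw : Hᶜ.degree (σ u) ≠ 1)
    (hGne : ∃ y, Gᶜ.degree y = 1) (hHne : ∃ x, Hᶜ.degree x = 1) (r : ℕ) :
    kappa G r = kappa H r := by
  obtain ⟨y, hy⟩ := hGne
  obtain ⟨x, hx⟩ := hHne
  have hκ₂ : kappa G 2 = kappa H 2 :=
    le_antisymm (h.symm.kappa_two_le hG (fun hxw => hw (hxw ▸ hx)) hx)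
      (h.kappa_two_le hH (fun hyu => hu (hyu ▸ hy)) hy)
  have hM : ∀ y, Gᶜ.degree y = 1 ↔ Hᶜ.degree (σ y) = 1 := by
    intro y
    obtain rfl | hyu := eq_or_ne y u
    · exact iff_of_false hu hw
    · have := h.kappa_two_add_compl_degree hyu
      omega
  induction r with
  | zero => rw [kappa_zero, kappa_zero]
  | succ r ih => exact h.kappa_succ_eq hG hH hM hu ⟨y, hy⟩ ih

end ShareCardsExcept

section MaxDegree

variable {n : ℕ} (G : SimpleGraph (Fin n)) [DecidableRel G.Adj]

theorem compl_degree_eq_sub_deg (v : Fin n) : Gᶜ.degree v = n - 1 - deg G v := by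
  rw [degree_compl, Fintype.card_fin, deg_eq_degree]

theorem compl_degree_pos_of_maxDeg_eq (hn : 2 ≤ n) (hΔ : maxDeg G = n - 2) (v : Fin n) :
    0 < Gᶜ.degree v := by
  have : deg G v ≤ maxDeg G := le_sup (f := deg G) (mem_univ v)
  rw [compl_degree_eq_sub_deg]
  omega

theorem exists_compl_degree_eq_one_of_maxDeg_eq (hn : 2 ≤ n) (hΔ : maxDeg G = n - 2) :
    ∃ y, Gᶜ.degree y = 1 := by
  obtain ⟨y, -, hy⟩ := exists_mem_eq_sup univ (univ_nonempty_iff.2 ⟨⟨0, by omega⟩⟩) (deg G)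
  have : univ.sup (deg G) = n - 2 := hΔ
  refine ⟨y, ?_⟩
  rw [compl_degree_eq_sub_deg]
  omega

theorem compl_degree_ne_one_of_deg_lt {v : Fin n} (hv : deg G v < n - 2) : Gᶜ.degree v ≠ 1 := by
  rw [compl_degree_eq_sub_deg]
  omega

end MaxDegree

theorem clique_count_of_maxDeg_n_sub_two_hidden_small_general {n : ℕ}
    (G H : SimpleGraph (Fin n)) (u w : Fin n)
    (π : {x : Fin n // x ≠ u} ≃ {y : Fin n // y ≠ w})
    (hshare : ShareCardsVia G H u w π)
    (hDeltaG : maxDeg G = n - 2) (hDeltaH : maxDeg H = n - 2)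
    (hu : deg G u < n - 2) (hw : deg H w < n - 2) :
    ∀ r : ℕ, 1 ≤ r → kappa G r = kappa H r := by
  classical
  intro r _
  have hn : 2 ≤ n := by omega
  obtain ⟨σ, rfl, hσ⟩ := hshare.exists_shareCardsExcept
  exact hσ.kappa_eq (compl_degree_pos_of_maxDeg_eq G hn hDeltaG)
    (compl_degree_pos_of_maxDeg_eq H hn hDeltaH) (compl_degree_ne_one_of_deg_lt G hu)
    (compl_degree_ne_one_of_deg_lt H hw) (exists_compl_degree_eq_one_of_maxDeg_eq G hn hDeltaG)
    (exists_compl_degree_eq_one_of_maxDeg_eq H hn hDeltaH) r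

theorem clique_count_of_maxDeg_n_sub_two_hidden_small {n : ℕ} (hn : 7 ≤ n)
    (G H : SimpleGraph (Fin n)) (u w : Fin n)
    (π : {x : Fin n // x ≠ u} ≃ {y : Fin n // y ≠ w})
    (hshare : ShareCardsVia G H u w π)
    (hDeltaG : maxDeg G = n - 2) (hDeltaH : maxDeg H = n - 2)
    (hu : deg G u < n - 2) (hw : deg H w < n - 2) :
    ∀ r : ℕ, 1 ≤ r → kappa G r = kappa H r :=
  clique_count_of_maxDeg_n_sub_two_hidden_small_general G H u w π hshare hDeltaG hDeltaH hu hw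
end

section
/- Let G be a simple graph on n ≥ 7 vertices with Δ(G) ≤ n−3, let r ≥ 1 be an integer, and let u be a vertex of G that is not the unique vertex of degree Δ(G). Define D = { deg_r(x, G−v) : v ∈ V(G)∖{u}, x ∈ V(G)∖{v}, deg(x, G−v) = Δ(G) } and M = { κ_r(G−v) : v ∈ V(G)∖{u}, deg(v,G) = Δ(G) }. If deg(u,G) < Δ(G), or if deg(u,G) = Δ(G) and there exists a vertex v ≠ u with deg(v,G) = Δ(G) and deg_r(v,G) = deg_r(u,G), then min D + max M = max D + min M = κ_r(G). -/
open SimpleGraph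

variable {n : ℕ} {G : SimpleGraph (Fin n)} {v : Fin n}

lemma deg_le_maxDeg (G : SimpleGraph (Fin n)) (x : Fin n) : deg G x ≤ maxDeg G :=
  Finset.le_sup (Finset.mem_univ x)

lemma image_neighborSet_gcard (x : {y : Fin n // y ≠ v}) :
    Subtype.val '' (gcard G v).neighborSet x = G.neighborSet x.1 \ {v} := by
  ext y
  constructor
  · rintro ⟨⟨y, hy⟩, hadj, rfl⟩
    exact ⟨hadj, hy⟩
  · rintro ⟨hadj, hy⟩
    exact ⟨⟨y, hy⟩, hadj, rfl⟩

lemma deg_gcard (x : {y : Fin n // y ≠ v}) :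
    deg (gcard G v) x = (G.neighborSet x.1 \ {v}).ncard := by
  rw [deg, ← image_neighborSet_gcard, Set.ncard_image_of_injective _ Subtype.val_injective]

lemma deg_gcard_of_not_adj (x : {y : Fin n // y ≠ v}) (h : ¬ G.Adj x.1 v) :
    deg (gcard G v) x = deg G x.1 := by
  rw [deg_gcard, Set.diff_singleton_eq_self (by simpa using h), deg]

lemma deg_gcard_eq_maxDeg (x : {y : Fin n // y ≠ v}) (h : deg (gcard G v) x = maxDeg G) :
    deg G x.1 = maxDeg G ∧ ¬ G.Adj x.1 v := by
  have hfin : (G.neighborSet x.1).Finite := Set.toFinite _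
  have hnadj : ¬ G.Adj x.1 v := by
    intro hadj
    have hv : v ∈ G.neighborSet x.1 := hadj
    have h1 : (G.neighborSet x.1 \ {v}).ncard < (G.neighborSet x.1).ncard := by
      refine Set.ncard_lt_ncard ⟨Set.diff_subset, fun hs => ?_⟩ hfin
      exact (hs hv).2 rfl
    have := deg_le_maxDeg G x.1
    rw [deg] at this
    rw [deg_gcard] at h
    omega
  refine ⟨le_antisymm (deg_le_maxDeg G x.1) ?_, hnadj⟩
  rw [← h, deg_gcard_of_not_adj x hnadj]

/-- the embedding -/
abbrev emb (v : Fin n) : {y : Fin n // y ≠ v} ↪ Fin n := Function.Embedding.subtype _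

lemma mem_cliqueSet_map_iff (s : Finset {y : Fin n // y ≠ v}) :
    s ∈ (gcard G v).cliqueSet r ↔ s.map (emb v) ∈ G.cliqueSet r := by
  simp only [mem_cliqueSet_iff, isNClique_iff, Finset.card_map, and_congr_left_iff]
  intro _
  constructor
  · intro hcl a ha b hb hab
    simp only [Finset.coe_map, Set.mem_image] at ha hb
    obtain ⟨a', ha', rfl⟩ := ha
    obtain ⟨b', hb', rfl⟩ := hb
    have : a' ≠ b' := fun h => hab (by rw [h])
    exact hcl ha' hb' this
  · intro hcl a ha b hb hab
    have := hcl (Finset.mem_coe.2 (Finset.mem_map_of_mem _ ha))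
      (Finset.mem_coe.2 (Finset.mem_map_of_mem _ hb)) (fun h => hab (Subtype.ext h))
    exact this

lemma image_cliqueSet_gcard :
    (Finset.map (emb v)) '' (gcard G v).cliqueSet r = {s ∈ G.cliqueSet r | v ∉ s} := by
  ext t
  constructor
  · rintro ⟨s, hs, rfl⟩
    refine ⟨(mem_cliqueSet_map_iff s).1 hs, ?_⟩
    simp
  · rintro ⟨ht, hv⟩
    refine ⟨t.subtype (· ≠ v), ?_, ?_⟩
    · rw [mem_cliqueSet_map_iff, Finset.subtype_map_of_mem (fun a ha => ?_)]
      · exact ht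
      · exact fun h => hv (h ▸ ha)
    · exact Finset.subtype_map_of_mem (fun a ha => fun h => hv (h ▸ ha))

lemma image_degSet_gcard (x : {y : Fin n // y ≠ v}) :
    (Finset.map (emb v)) '' {s | s ∈ (gcard G v).cliqueSet r ∧ x ∈ s}
      = {s | s ∈ G.cliqueSet r ∧ x.1 ∈ s ∧ v ∉ s} := by
  ext t
  constructor
  · rintro ⟨s, ⟨hs, hx⟩, rfl⟩
    refine ⟨(mem_cliqueSet_map_iff s).1 hs, ?_, by simp⟩
    exact Finset.mem_map_of_mem _ hx
  · rintro ⟨ht, hx, hv⟩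
    have h1 : (Finset.map (emb v)) '' (gcard G v).cliqueSet r = {s ∈ G.cliqueSet r | v ∉ s} :=
      image_cliqueSet_gcard
    have : t ∈ (Finset.map (emb v)) '' (gcard G v).cliqueSet r := h1 ▸ ⟨ht, hv⟩
    obtain ⟨s, hs, rfl⟩ := this
    refine ⟨s, ⟨hs, ?_⟩, rfl⟩
    have : emb v x ∈ Finset.map (emb v) s := hx
    exact (Finset.mem_map' (emb v)).1 this

lemma degR_gcard_of_not_adj (x : {y : Fin n // y ≠ v}) (h : ¬ G.Adj x.1 v) :
    degR (gcard G v) r x = degR G r x.1 := by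
  rw [degR, ← Set.ncard_image_of_injective _ (Finset.map_injective (emb v)),
    image_degSet_gcard]
  congr 1
  ext t
  simp only [Set.mem_setOf_eq, and_congr_right_iff, degR]
  intro ht
  constructor
  · rintro ⟨hx, _⟩; exact hx
  · intro hx
    refine ⟨hx, fun hv => ?_⟩
    have hadj := ht.1 (Finset.mem_coe.2 hx) (Finset.mem_coe.2 hv) x.2
    exact h hadj

lemma kappa_gcard_add (G : SimpleGraph (Fin n)) (v : Fin n) (r : ℕ) :
    kappa (gcard G v) r + degR G r v = kappa G r := by
  rw [kappa, ← Set.ncard_image_of_injective _ (Finset.map_injective (emb v)),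
    image_cliqueSet_gcard, degR, kappa]
  rw [← Set.ncard_union_eq ?_ (Set.toFinite _) (Set.toFinite _)]
  · congr 1
    ext t
    by_cases hv : v ∈ t <;> simp [hv, Set.mem_setOf_eq, and_comm]
  · rw [Set.disjoint_left]
    rintro t ⟨_, hv⟩ ⟨_, hv'⟩
    exact hv hv'

lemma exists_nonneighbor (hn : 7 ≤ n) (hDelta : maxDeg G ≤ n - 3) (u x : Fin n) :
    ∃ w : Fin n, w ≠ u ∧ x ≠ w ∧ ¬ G.Adj x w := by
  by_contra h
  push_neg at h
  have hsub : (Set.univ : Set (Fin n)) ⊆ G.neighborSet x ∪ {x, u} := by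
    intro w _
    by_cases hwu : w = u
    · exact Or.inr (Or.inr hwu)
    · by_cases hwx : x = w
      · exact Or.inr (Or.inl hwx.symm)
      · exact Or.inl (h w hwu hwx)
  have h1 : (Set.univ : Set (Fin n)).ncard ≤ (G.neighborSet x ∪ ({x, u} : Set (Fin n))).ncard :=
    Set.ncard_le_ncard hsub (Set.toFinite _)
  have h2 : (G.neighborSet x ∪ ({x, u} : Set (Fin n))).ncard
      ≤ (G.neighborSet x).ncard + ({x, u} : Set (Fin n)).ncard := Set.ncard_union_le _ _
  have h3 : ({x, u} : Set (Fin n)).ncard ≤ 2 := by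
    refine le_trans (Set.ncard_insert_le _ _) ?_
    simp [Set.ncard_singleton]
  have h4 : (G.neighborSet x).ncard ≤ n - 3 := le_trans (deg_le_maxDeg G x) hDelta
  have h5 : (Set.univ : Set (Fin n)).ncard = n := by
    rw [Set.ncard_univ]; simp
  omega

theorem two_choices_agree {n : ℕ} (hn : 7 ≤ n) (G : SimpleGraph (Fin n))
    (hDelta : maxDeg G ≤ n - 3) (r : ℕ) (hr : 1 ≤ r) (u : Fin n)
    (hu : deg G u < maxDeg G ∨ (deg G u = maxDeg G ∧
      ∃ v : Fin n, v ≠ u ∧ deg G v = maxDeg G ∧ degR G r v = degR G r u)) :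
    let D : Set ℕ := {d | ∃ v : Fin n, v ≠ u ∧ ∃ x : {y : Fin n // y ≠ v},
      deg (gcard G v) x = maxDeg G ∧ d = degR (gcard G v) r x}
    let M : Set ℕ := {m | ∃ v : Fin n, v ≠ u ∧ deg G v = maxDeg G ∧
      m = kappa (gcard G v) r}
    sInf D + sSup M = kappa G r ∧ sSup D + sInf M = kappa G r := by
  intro D M
  set f : Fin n → ℕ := degR G r with hf
  have hfle : ∀ x, f x ≤ kappa G r := by
    intro x
    exact Set.ncard_le_ncard (fun s hs => hs.1) (Set.toFinite _)
  set S : Set (Fin n) := {x | x ≠ u ∧ deg G x = maxDeg G} with hS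
  -- D = f '' S
  have hD : D = f '' S := by
    have hD1 : D = f '' {x | deg G x = maxDeg G} := by
      ext d
      constructor
      · rintro ⟨v, hvu, x, hdeg, rfl⟩
        obtain ⟨hxm, hnadj⟩ := deg_gcard_eq_maxDeg x hdeg
        exact ⟨x.1, hxm, (degR_gcard_of_not_adj x hnadj).symm⟩
      · rintro ⟨x, hx, rfl⟩
        obtain ⟨w, hwu, hxw, hnadj⟩ := exists_nonneighbor hn hDelta u x
        refine ⟨w, hwu, ⟨x, hxw⟩, ?_, (degR_gcard_of_not_adj ⟨x, hxw⟩ hnadj).symm⟩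
        rw [deg_gcard_of_not_adj _ hnadj]
        exact hx
    rw [hD1]
    apply subset_antisymm
    · rintro _ ⟨x, hx, rfl⟩
      by_cases hxu : x = u
      · subst hxu
        rcases hu with h | ⟨_, v, hvu, hv, hfv⟩
        · exact absurd hx (ne_of_lt h)
        · exact ⟨v, ⟨hvu, hv⟩, hfv⟩
      · exact ⟨x, ⟨hxu, hx⟩, rfl⟩
    · rintro _ ⟨x, hx, rfl⟩
      exact ⟨x, hx.2, rfl⟩
  have hM : M = (fun x => kappa G r - f x) '' S := by
    ext m
    constructor
    · rintro ⟨v, hvu, hv, rfl⟩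
      refine ⟨v, ⟨hvu, hv⟩, ?_⟩
      have := kappa_gcard_add G v r
      simp only [hf]
      omega
    · rintro ⟨v, ⟨hvu, hv⟩, rfl⟩
      refine ⟨v, hvu, hv, ?_⟩
      have := kappa_gcard_add G v r
      have := hfle v
      simp only [hf] at *
      omega
  have hSne : S.Nonempty := by
    rcases hu with h | ⟨_, v, hvu, hv, _⟩
    · obtain ⟨x, _, hx⟩ := Finset.exists_mem_eq_sup (Finset.univ : Finset (Fin n))
        ⟨u, Finset.mem_univ u⟩ (fun v => deg G v)
      refine ⟨x, fun hxu => ?_, hx.symm⟩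
      rw [hxu] at hx
      rw [maxDeg] at h
      omega
    · exact ⟨v, hvu, hv⟩
  have hDne : D.Nonempty := by rw [hD]; exact hSne.image f
  have hMne : M.Nonempty := by rw [hM]; exact hSne.image _
  have hDbdd : BddAbove D := by rw [hD]; exact ((Set.toFinite S).image f).bddAbove
  have hMbdd : BddAbove M := by rw [hM]; exact ((Set.toFinite S).image _).bddAbove
  obtain ⟨x₀, hx₀S, hx₀⟩ : sInf D ∈ f '' S := hD ▸ Nat.sInf_mem hDne
  obtain ⟨y₀, hy₀S, hy₀⟩ : sSup M ∈ (fun x => kappa G r - f x) '' S :=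
    hM ▸ Nat.sSup_mem hMne hMbdd
  obtain ⟨x₁, hx₁S, hx₁⟩ : sSup D ∈ f '' S := hD ▸ Nat.sSup_mem hDne hDbdd
  obtain ⟨y₁, hy₁S, hy₁⟩ : sInf M ∈ (fun x => kappa G r - f x) '' S := hM ▸ Nat.sInf_mem hMne
  have h₁ : kappa G r - f x₀ ≤ sSup M := le_csSup hMbdd (hM ▸ ⟨x₀, hx₀S, rfl⟩)
  have h₂ : sInf D ≤ f y₀ := Nat.sInf_le (hD ▸ ⟨y₀, hy₀S, rfl⟩)
  have h₃ : sInf M ≤ kappa G r - f x₁ := Nat.sInf_le (hM ▸ ⟨x₁, hx₁S, rfl⟩)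
  have h₄ : f y₁ ≤ sSup D := le_csSup hDbdd (hD ▸ ⟨y₁, hy₁S, rfl⟩)
  have hy₀' : kappa G r - f y₀ = sSup M := hy₀
  have hy₁' : kappa G r - f y₁ = sInf M := hy₁
  have l0 := hfle x₀
  have l1 := hfle x₁
  have l2 := hfle y₀
  have l3 := hfle y₁
  omega
end
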